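/- The symmetric groups {S_n}_{n≥0} with compositions σ ∘_i τ = (1_i ⊞ τ ⊞ 1_{n-i}) · s_i^m(σ) satisfy the shifted operad associativity: for λ ∈ S_l, μ ∈ S_m, ν ∈ S_n and 0 ≤ i ≤ l, 0 ≤ j ≤ m, one has (λ ∘_i μ) ∘_{i+j} ν = λ ∘_i (μ ∘_j ν). -/

import Mathlib

/-!
Extend every permutation of `Fin a` by the identity to a permutation of `ℕ`. After this extension,
`σ ∘ᵢ τ` becomes the explicit function `blockSubst i (σ⁻¹ i) m σ τ`: the point `q = σ⁻¹ i` is blown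
up into the block `[q, q + m]`, which is sent by `τ` onto `[i, i + m]`, while `σ` acts on the other
points with its values `≥ i` shifted up by `m`. Associativity of `blockSubst` is a case distinction
on the position of a point relative to the two nested blocks. The iterated degeneracy `s_i^m σ` is
`blockSubst` with `τ = id`, which follows from the same associativity, and the padding
`1_i ⊞ τ ⊞ 1_{n-i}` is `blockSubst` with `σ = id`.
-/

open Equiv

namespace CSGPaper

/-- Transport of a permutation along an equality of index sets. -/
def pcast {a b : ℕ} (h : a = b) (σ : Perm (Fin a)) : Perm (Fin b) :=
  Equiv.permCongr (finCongr h) σ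

/-- Block sum of permutations: `σ` acts on the first `a` points, `τ` on the last `b`. -/
def bsum {a b : ℕ} (σ : Perm (Fin a)) (τ : Perm (Fin b)) : Perm (Fin (a + b)) :=
  Equiv.permCongr finSumFinEquiv (Equiv.sumCongr σ τ)

/-- The degeneracy `s_i` on permutations: duplicate the point `i` in the target and
`σ⁻¹ i` in the source, renumbering order-preservingly. -/
def pdegen {a : ℕ} (i : Fin a) (σ : Perm (Fin a)) : Perm (Fin (a + 1)) :=
  (finSuccEquiv' ((σ.symm i).succ)).trans
    ((Equiv.optionCongr σ).trans (finSuccEquiv' i.succ).symm)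

/-- The face `d_i` on permutations: delete the point `i` in the target and `σ⁻¹ i`
in the source, renumbering order-preservingly. -/
def pface {a : ℕ} (i : Fin (a + 1)) (σ : Perm (Fin (a + 1))) : Perm (Fin a) :=
  Equiv.removeNone ((finSuccEquiv' (σ.symm i)).symm.trans (σ.trans (finSuccEquiv' i)))

/-- The `m`-fold iterated degeneracy at `i` (replacing the point `i` by `m+1` points). -/
def pdegenIter {a : ℕ} (i : Fin a) (σ : Perm (Fin a)) : (m : ℕ) → Perm (Fin (a + m))
  | 0 => σ
  | m + 1 => pdegen (Fin.castLE (Nat.le_add_right a m) i) (pdegenIter i σ m)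

/-- `1_i ⊞ τ ⊞ 1_{n-i}` : the permutation `τ` padded by `i` fixed points on the left
and `n - i` fixed points on the right. -/
def ppad {n m : ℕ} (i : Fin (n + 1)) (τ : Perm (Fin (m + 1))) : Perm (Fin (n + m + 1)) :=
  pcast (show i.val + (m + 1) + (n - i.val) = n + m + 1 by have := i.isLt; omega)
    (bsum (bsum (1 : Perm (Fin i.val)) τ) (1 : Perm (Fin (n - i.val))))

/-- The shifted operadic composition `σ ∘ᵢ τ = (1_i ⊞ τ ⊞ 1_{n-i}) · s_i^m(σ)`. -/
def pcomp {n m : ℕ} (i : Fin (n + 1)) (σ : Perm (Fin (n + 1))) (τ : Perm (Fin (m + 1))) :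
    Perm (Fin (n + m + 1)) :=
  ppad i τ * pcast (show n + 1 + m = n + m + 1 by omega) (pdegenIter i σ m)

def shiftFrom (i m y : ℕ) : ℕ := if y < i then y else y + m

def blockSubst (i q m : ℕ) (f g : ℕ → ℕ) (x : ℕ) : ℕ :=
  if x < q then shiftFrom i m (f x)
  else if x ≤ q + m then i + g (x - q)
  else shiftFrom i m (f (x - m))

lemma shiftFrom_of_lt {i m y : ℕ} (h : y < i) : shiftFrom i m y = y := if_pos h

lemma shiftFrom_zero (i y : ℕ) : shiftFrom i 0 y = y := by
  unfold shiftFrom; split_ifs <;> rfl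

lemma shiftFrom_shiftFrom {i j m n : ℕ} (hj : j ≤ m) (y : ℕ) :
    shiftFrom (i + j) n (shiftFrom i m y) = shiftFrom i (m + n) y := by
  unfold shiftFrom; split_ifs <;> omega

lemma shiftFrom_add (i j n y : ℕ) : shiftFrom (i + j) n (i + y) = i + shiftFrom j n y := by
  unfold shiftFrom; split_ifs <;> omega

section blockSubst
variable {i q m x : ℕ} {f g : ℕ → ℕ}

lemma blockSubst_of_lt (h : x < q) : blockSubst i q m f g x = shiftFrom i m (f x) :=
  if_pos h

lemma blockSubst_of_mem (h₁ : q ≤ x) (h₂ : x ≤ q + m) :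
    blockSubst i q m f g x = i + g (x - q) := by
  rw [blockSubst, if_neg (by omega), if_pos h₂]

lemma blockSubst_of_gt (h : q + m < x) :
    blockSubst i q m f g x = shiftFrom i m (f (x - m)) := by
  rw [blockSubst, if_neg (by omega), if_neg (by omega)]

theorem blockSubst_assoc {j r n : ℕ} (hj : j ≤ m) (hr : r ≤ m) (f g h : ℕ → ℕ) :
    blockSubst (i + j) (q + r) n (blockSubst i q m f g) h
      = blockSubst i q (m + n) f (blockSubst j r n g h) := by
  funext x
  rcases lt_or_ge x q with h₁ | h₁
  · rw [blockSubst_of_lt (by omega), blockSubst_of_lt h₁, blockSubst_of_lt h₁,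
      shiftFrom_shiftFrom hj]
  rcases lt_or_ge x (q + r) with h₂ | h₂
  · rw [blockSubst_of_lt h₂, blockSubst_of_mem h₁ (by omega), blockSubst_of_mem h₁ (by omega),
      blockSubst_of_lt (by omega), shiftFrom_add]
  rcases le_or_gt x (q + r + n) with h₃ | h₃
  · rw [blockSubst_of_mem h₂ h₃, blockSubst_of_mem h₁ (by omega),
      blockSubst_of_mem (by omega) (by omega), Nat.sub_sub, add_assoc]
  rcases le_or_gt x (q + m + n) with h₄ | h₄
  · rw [blockSubst_of_gt h₃, blockSubst_of_mem (by omega) (by omega), shiftFrom_add,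
      blockSubst_of_mem h₁ (by omega), blockSubst_of_gt (by omega), Nat.sub_right_comm]
  · rw [blockSubst_of_gt h₃, blockSubst_of_gt (by omega), shiftFrom_shiftFrom hj,
      blockSubst_of_gt (by omega), Nat.sub_sub, add_comm n]

lemma blockSubst_zero_id (h : f q = i) : blockSubst i q 0 f id = f := by
  funext x
  rcases lt_trichotomy x q with hx | rfl | hx
  · rw [blockSubst_of_lt hx, shiftFrom_zero]
  · rw [blockSubst_of_mem le_rfl (by omega), Nat.sub_self, id, add_zero, h]
  · rw [blockSubst_of_gt (by omega), shiftFrom_zero, Nat.sub_zero]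

lemma blockSubst_self_id_id (i m : ℕ) : blockSubst i i m id id = id := by
  funext x
  simp only [blockSubst, shiftFrom, id]
  split_ifs <;> omega

lemma blockSubst_self_id_shiftFrom {y : ℕ} (g : ℕ → ℕ) (hy : y ≠ i) :
    blockSubst i i m id g (shiftFrom i m y) = shiftFrom i m y := by
  unfold shiftFrom
  split_ifs with h
  · rw [blockSubst_of_lt h, id, shiftFrom_of_lt h]
  · rw [blockSubst_of_gt (by omega), id, Nat.add_sub_cancel, shiftFrom, if_neg h]

lemma blockSubst_self_id_comp (g : ℕ → ℕ) (hf : ∀ y, f y = i → y = q) :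
    blockSubst i i m id g ∘ blockSubst i q m f id = blockSubst i q m f g := by
  funext x
  rcases lt_or_ge x q with h₁ | h₁
  · rw [Function.comp_apply, blockSubst_of_lt h₁, blockSubst_of_lt h₁,
      blockSubst_self_id_shiftFrom g (fun h => by have := hf x h; omega)]
  rcases le_or_gt x (q + m) with h₂ | h₂
  · rw [Function.comp_apply, blockSubst_of_mem h₁ h₂, blockSubst_of_mem h₁ h₂, id,
      blockSubst_of_mem (by omega) (by omega), Nat.add_sub_cancel_left]
  · rw [Function.comp_apply, blockSubst_of_gt h₂, blockSubst_of_gt h₂,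
      blockSubst_self_id_shiftFrom g (fun h => by have := hf _ h; omega)]

end blockSubst

def natPerm {a : ℕ} (σ : Perm (Fin a)) : Perm ℕ := σ.extendDomain Fin.equivSubtype

section natPerm
variable {a : ℕ}

@[simp] lemma natPerm_apply_val (σ : Perm (Fin a)) (x : Fin a) : natPerm σ x = σ x :=
  Perm.extendDomain_apply_image σ Fin.equivSubtype x

lemma natPerm_apply_of_le (σ : Perm (Fin a)) {x : ℕ} (h : a ≤ x) : natPerm σ x = x :=
  Perm.extendDomain_apply_not_subtype σ Fin.equivSubtype (by omega)

lemma natPerm_mul (σ τ : Perm (Fin a)) : natPerm (σ * τ) = natPerm σ * natPerm τ :=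
  (Perm.extendDomain_mul _ σ τ).symm

lemma natPerm_one : natPerm (1 : Perm (Fin a)) = 1 := Perm.extendDomain_one _

lemma natPerm_injective : Function.Injective (natPerm : Perm (Fin a) → Perm ℕ) :=
  Perm.extendDomainHom_injective Fin.equivSubtype

lemma natPerm_symm_apply_val (σ : Perm (Fin a)) (x : Fin a) : natPerm σ (σ.symm x) = x := by
  simp

lemma val_symm_eq_of_natPerm_eq {σ : Perm (Fin a)} {x : Fin a} {y : ℕ} (h : natPerm σ y = x) :
    (σ.symm x : ℕ) = y :=
  (natPerm σ).injective (by simp [h])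

lemma coe_natPerm_eq_of_forall {σ : Perm (Fin a)} {F : ℕ → ℕ}
    (hσ : ∀ x : Fin a, (σ x : ℕ) = F x) (hF : ∀ x, a ≤ x → F x = x) : ⇑(natPerm σ) = F := by
  funext x
  rcases lt_or_ge x a with h | h
  · exact (natPerm_apply_val σ ⟨x, h⟩).trans (hσ _)
  · rw [natPerm_apply_of_le σ h, hF x h]

lemma natPerm_pcast {b : ℕ} (h : a = b) (σ : Perm (Fin a)) :
    natPerm (pcast h σ) = natPerm σ := by
  subst h; rfl

lemma natPerm_bsum {b : ℕ} (σ : Perm (Fin a)) (τ : Perm (Fin b)) :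
    ⇑(natPerm (bsum σ τ)) = fun x => if x < a then natPerm σ x else a + natPerm τ (x - a) := by
  apply coe_natPerm_eq_of_forall
  · intro x
    induction x using Fin.addCases with
    | left y => simp [bsum, permCongr_apply]
    | right y => simp [bsum, permCongr_apply]
  · intro x hx
    rw [if_neg (by omega), natPerm_apply_of_le τ (by omega)]
    omega

end natPerm

lemma val_succAbove {n : ℕ} (p : Fin (n + 1)) (y : Fin n) :
    (p.succAbove y : ℕ) = if (y : ℕ) < p then (y : ℕ) else y + 1 := by
  unfold Fin.succAbove; split_ifs <;> simp_all [Fin.lt_def]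

lemma natPerm_pdegen {b : ℕ} (j : Fin b) (ρ : Perm (Fin b)) :
    ⇑(natPerm (pdegen j ρ)) = blockSubst j (ρ.symm j) 1 (natPerm ρ) id := by
  set q := ρ.symm j
  have hρ : ∀ y : Fin b, (ρ y : ℕ) = j ↔ (y : ℕ) = q := by
    intro y; rw [Fin.val_inj, Fin.val_inj, ← Equiv.eq_symm_apply]
  apply coe_natPerm_eq_of_forall
  · intro x
    rcases Fin.eq_self_or_eq_succAbove q.succ x with rfl | ⟨y, rfl⟩
    · simp [pdegen, q, blockSubst_of_mem]
    · have hy : pdegen j ρ (q.succ.succAbove y) = j.succ.succAbove (ρ y) := by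
        simp [pdegen, q]
      rw [hy, val_succAbove, val_succAbove, Fin.val_succ, Fin.val_succ]
      -- `succAbove` tests `ρ y ≤ j`, `shiftFrom` tests `ρ y < j`; these differ only at `y = q`.
      have := hρ y
      split_ifs <;> unfold blockSubst shiftFrom <;>
        simp only [Nat.add_sub_cancel, natPerm_apply_val, id] <;> split_ifs <;> omega
  · intro x hx
    have hj := j.isLt
    rw [blockSubst_of_gt (by omega), natPerm_apply_of_le ρ (by omega), shiftFrom,
      if_neg (by omega)]
    omega

lemma natPerm_ppad {n m : ℕ} (i : Fin (n + 1)) (τ : Perm (Fin (m + 1))) :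
    ⇑(natPerm (ppad i τ)) = blockSubst i i m id (natPerm τ) := by
  funext x
  simp only [ppad, natPerm_pcast, natPerm_bsum, natPerm_one, Perm.one_apply, blockSubst,
    shiftFrom, id]
  split_ifs <;> omega

lemma natPerm_pdegenIter {a : ℕ} (i : Fin a) (σ : Perm (Fin a)) (m : ℕ) :
    ⇑(natPerm (pdegenIter i σ m)) = blockSubst i (σ.symm i) m (natPerm σ) id := by
  induction m with
  | zero => exact (blockSubst_zero_id (natPerm_symm_apply_val σ i)).symm
  | succ m ih =>
    have hq : ((pdegenIter i σ m).symm (Fin.castLE (Nat.le_add_right a m) i) : ℕ) = σ.symm i :=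
      val_symm_eq_of_natPerm_eq (by rw [ih, blockSubst_of_mem le_rfl (by omega)]; simp)
    rw [pdegenIter, natPerm_pdegen, hq, Fin.val_castLE, ih]
    simpa [blockSubst_self_id_id] using blockSubst_assoc (i := i) (j := 0) (q := σ.symm i)
      (r := 0) (n := 1) (Nat.zero_le m) (Nat.zero_le m) (natPerm σ) id id

lemma natPerm_pcomp {n m : ℕ} (i : Fin (n + 1)) (σ : Perm (Fin (n + 1)))
    (τ : Perm (Fin (m + 1))) :
    ⇑(natPerm (pcomp i σ τ)) = blockSubst i (σ.symm i) m (natPerm σ) (natPerm τ) := by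
  rw [pcomp, natPerm_mul, Perm.coe_mul, natPerm_ppad, natPerm_pcast, natPerm_pdegenIter,
    blockSubst_self_id_comp]
  intro y hy
  exact (val_symm_eq_of_natPerm_eq hy).symm

lemma val_pcomp_symm {n m : ℕ} (i : Fin (n + 1)) (σ : Perm (Fin (n + 1)))
    (τ : Perm (Fin (m + 1))) (j : Fin (m + 1)) :
    ((pcomp i σ τ).symm ⟨i + j, by omega⟩ : ℕ) = σ.symm i + τ.symm j := by
  apply val_symm_eq_of_natPerm_eq
  rw [natPerm_pcomp, blockSubst_of_mem (by omega) (by omega), Nat.add_sub_cancel_left,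
    natPerm_symm_apply_val]

/-- shifted operad associativity `(λ ∘ᵢ μ) ∘_{i+j} ν = λ ∘ᵢ (μ ∘ⱼ ν)`. -/
theorem pcomp_assoc {l m n : ℕ} (i : Fin (l + 1)) (j : Fin (m + 1))
    (lam : Perm (Fin (l + 1))) (mu : Perm (Fin (m + 1))) (nu : Perm (Fin (n + 1))) :
    pcast (show l + m + n + 1 = l + (m + n) + 1 by omega)
        (pcomp (⟨i.val + j.val, by have := i.isLt; have := j.isLt; omega⟩ : Fin (l + m + 1))
          (pcomp i lam mu) nu)
      = pcomp i lam (pcomp j mu nu) := by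
  apply natPerm_injective
  apply DFunLike.coe_injective
  rw [natPerm_pcast, natPerm_pcomp, natPerm_pcomp, natPerm_pcomp, natPerm_pcomp, val_pcomp_symm]
  exact blockSubst_assoc (Nat.lt_succ_iff.mp j.isLt) (Nat.lt_succ_iff.mp (mu.symm j).isLt) _ _ _

end CSGPaper
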